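/- (Inter-agent collision avoidance with a common knot vector, Proposition 2 with Remark 4.) Let z¹ and z² be two B-spline curves of the same order d defined over the same strictly increasing knot vector τ_0 < … < τ_m, with control points p^1_0,…,p^1_n and p^2_0,…,p^2_n respectively (n = m − d). Suppose that for every index i with d − 1 ≤ i ≤ n there exists a vector c_i ∈ ℝ^q such that ⟨c_i, p^1_{j_1}⟩ < ⟨c_i, p^2_{j_2}⟩ for all j_1, j_2 with i − d + 1 ≤ j_1, j_2 ≤ i. Then the two curves never collide: z¹(t) ≠ z²(t) for every t with τ_{d−1} ≤ t < τ_{n+1}. -/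

import Mathlib

/-!
On a knot span `[τ i, τ (i + 1))` only the `d` basis functions `B_{j,d}` with `i + 1 - d ≤ j ≤ i`
can be nonzero, and they are nonnegative and sum to one. Hence `z¹(t)` and `z²(t)` are weighted
averages, with the same weights, of control points that the vector `c_i` separates, so
`⟪c_i, z¹(t)⟫ < ⟪c_i, z²(t)⟫`. Since the knots are only increasing up to `τ m`, they are first
frozen beyond `m`: this changes none of the basis functions involved and makes the knot vector
monotone, which is all the support, positivity and partition-of-unity properties need.
-/

/-- Cox–de Boor B-spline basis function `B_{i,d}(t)` of order `d` for the knot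
vector `τ`.  In Lean, division by zero yields zero, which matches the standard
convention that any term of the recursion whose denominator vanishes is taken
to be zero. -/
noncomputable def bspline (τ : ℕ → ℝ) : ℕ → ℕ → ℝ → ℝ
  | 0, _, _ => 0
  | 1, i, t => if τ i ≤ t ∧ t < τ (i + 1) then 1 else 0
  | d + 2, i, t =>
      (t - τ i) / (τ (i + d + 1) - τ i) * bspline τ (d + 1) i t
      + (τ (i + d + 2) - t) / (τ (i + d + 2) - τ (i + 1)) * bspline τ (d + 1) (i + 1) t

open scoped RealInnerProductSpace
open Finset

section Bspline

variable {τ : ℕ → ℝ} {d j : ℕ} {t : ℝ}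

lemma bspline_congr {σ : ℕ → ℝ} (h : ∀ k, j ≤ k → k ≤ j + d → τ k = σ k) :
    bspline τ d j t = bspline σ d j t := by
  induction d, j, t using bspline.induct τ with
  | case1 => rfl
  | case2 j t | case3 j t =>
    simp only [bspline, h j le_rfl (by omega), h (j + 1) (by omega) le_rfl]
  | case4 d j t ih₁ ih₂ =>
    simp only [bspline, h j le_rfl (by omega), h (j + 1) (by omega) (by omega),
      h (j + d + 1) (by omega) (by omega), h (j + d + 2) (by omega) le_rfl,
      ih₁ fun k hk hk' => h k hk (by omega), ih₂ fun k hk hk' => h k (by omega) (by omega)]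

lemma bspline_eq_zero_of_notMem_Ico (hτ : Monotone τ) (ht : t ∉ Set.Ico (τ j) (τ (j + d))) :
    bspline τ d j t = 0 := by
  induction d, j, t using bspline.induct τ with
  | case1 => rfl
  | case2 j t h => exact absurd h ht
  | case3 j t h => simp only [bspline, if_neg h]
  | case4 d j t ih₁ ih₂ =>
    have h₁ : t ∉ Set.Ico (τ j) (τ (j + (d + 1))) := fun h =>
      ht (Set.Ico_subset_Ico le_rfl (hτ (by omega)) h)
    have h₂ : t ∉ Set.Ico (τ (j + 1)) (τ (j + 1 + (d + 1))) := fun h =>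
      ht (Set.Ico_subset_Ico (hτ (by omega)) (hτ (by omega)) h)
    simp only [bspline, ih₁ h₁, ih₂ h₂, mul_zero, add_zero]

lemma mem_Ico_of_bspline_ne_zero (hτ : Monotone τ) (h : bspline τ d j t ≠ 0) :
    t ∈ Set.Ico (τ j) (τ (j + d)) :=
  not_imp_comm.1 (bspline_eq_zero_of_notMem_Ico hτ) h

lemma bspline_nonneg (hτ : Monotone τ) : 0 ≤ bspline τ d j t := by
  induction d, j, t using bspline.induct τ with
  | case1 => exact le_rfl
  | case2 j t h => simp [bspline, h]
  | case3 j t h => simp [bspline, h]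
  | case4 d j t ih₁ ih₂ =>
    have h₁ : 0 ≤ (t - τ j) / (τ (j + d + 1) - τ j) * bspline τ (d + 1) j t := by
      by_cases hB : bspline τ (d + 1) j t = 0
      · simp [hB]
      obtain ⟨hjt, -⟩ := mem_Ico_of_bspline_ne_zero hτ hB
      have hden := hτ (by omega : j ≤ j + d + 1)
      exact mul_nonneg (div_nonneg (by linarith) (by linarith)) ih₁
    have h₂ : 0 ≤ (τ (j + d + 2) - t) / (τ (j + d + 2) - τ (j + 1)) *
        bspline τ (d + 1) (j + 1) t := by
      by_cases hB : bspline τ (d + 1) (j + 1) t = 0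
      · simp [hB]
      obtain ⟨-, htj⟩ := mem_Ico_of_bspline_ne_zero hτ hB
      rw [show j + 1 + (d + 1) = j + d + 2 by omega] at htj
      have hden := hτ (by omega : j + 1 ≤ j + d + 2)
      exact mul_nonneg (div_nonneg (by linarith) (by linarith)) ih₂
    exact add_nonneg h₁ h₂

lemma bspline_succ_eq (hτ : Monotone τ) (hd : 1 ≤ d) :
    bspline τ (d + 1) j t =
      (t - τ j) / (τ (j + d) - τ j) * bspline τ d j t +
        (1 - (t - τ (j + 1)) / (τ (j + 1 + d) - τ (j + 1))) * bspline τ d (j + 1) t := by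
  obtain ⟨e, rfl⟩ : ∃ e, d = e + 1 := ⟨d - 1, by omega⟩
  show _ + (τ (j + e + 2) - t) / (τ (j + e + 2) - τ (j + 1)) * _ = _
  congr 1
  by_cases hB : bspline τ (e + 1) (j + 1) t = 0
  · simp [hB]
  have hden : τ (j + 1 + (e + 1)) - τ (j + 1) ≠ 0 := by
    have := mem_Ico_of_bspline_ne_zero hτ hB
    exact sub_ne_zero.2 (ne_of_gt (lt_of_le_of_lt this.1 this.2))
  rw [show j + e + 2 = j + 1 + (e + 1) by omega]
  field_simp
  ring

lemma le_and_lt_add_of_bspline_ne_zero {i : ℕ} (hτ : Monotone τ)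
    (ht : t ∈ Set.Ico (τ i) (τ (i + 1))) (h : bspline τ d j t ≠ 0) : j ≤ i ∧ i < j + d := by
  obtain ⟨hjt, htj⟩ := mem_Ico_of_bspline_ne_zero hτ h
  exact ⟨Nat.lt_succ_iff.1 (hτ.reflect_lt (hjt.trans_lt ht.2)),
    hτ.reflect_lt (ht.1.trans_lt htj)⟩

lemma sum_range_bspline_eq_one {i N : ℕ} (hτ : Monotone τ) (hd : 1 ≤ d) (hdi : d ≤ i + 1)
    (hiN : i < N) (ht : t ∈ Set.Ico (τ i) (τ (i + 1))) :
    ∑ j ∈ range N, bspline τ d j t = 1 := by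
  have hzero : ∀ {d j}, ¬(j ≤ i ∧ i < j + d) → bspline τ d j t = 0 := fun hj =>
    not_imp_comm.1 (le_and_lt_add_of_bspline_ne_zero hτ ht) hj
  induction d, hd using Nat.le_induction generalizing N with
  | base =>
    rw [sum_eq_single_of_mem i (mem_range.2 hiN) fun j _ hji => hzero (by omega)]
    simp [bspline, ht.1, ht.2]
  | succ d hd ih =>
    set f : ℕ → ℝ := fun j => (t - τ j) / (τ (j + d) - τ j) * bspline τ d j t
    have hstep : ∀ j, bspline τ (d + 1) j t = (f j - f (j + 1)) + bspline τ d (j + 1) t := by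
      intro j
      rw [bspline_succ_eq hτ hd]
      ring
    have hf0 : f 0 = 0 := by simp [f, hzero (d := d) (j := 0) (by omega)]
    have hfN : f N = 0 := by simp [f, hzero (d := d) (j := N) (by omega)]
    have hshift := sum_range_succ' (fun j => bspline τ d j t) N
    rw [ih (by omega) (by omega), hzero (d := d) (j := 0) (by omega)] at hshift
    simp only [hstep, sum_add_distrib, sum_range_sub', hf0, hfN]
    linarith

end Bspline

lemma exists_mem_Ico_of_le_of_lt (τ : ℕ → ℝ) {a b : ℕ} {t : ℝ} (hab : a ≤ b)
    (ha : τ a ≤ t) (hb : t < τ b) : ∃ i, a ≤ i ∧ i < b ∧ t ∈ Set.Ico (τ i) (τ (i + 1)) := by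
  induction b, hab using Nat.le_induction with
  | base => exact absurd hb (not_lt.2 ha)
  | succ b hab ih =>
    by_cases hbt : τ b ≤ t
    · exact ⟨b, hab, b.lt_succ_self, hbt, hb⟩
    · obtain ⟨i, hai, hib, hi⟩ := ih (lt_of_not_ge hbt)
      exact ⟨i, hai, hib.trans b.lt_succ_self, hi⟩

lemma sum_smul_ne_of_inner_lt {E ι : Type*} [NormedAddCommGroup E] [InnerProductSpace ℝ E]
    {s : Finset ι} {w : ι → ℝ} {x y : ι → E} (c : E) (hw : ∀ j ∈ s, 0 ≤ w j)
    (hsum : ∑ j ∈ s, w j ≠ 0) (hlt : ∀ j ∈ s, w j ≠ 0 → ⟪c, x j⟫ < ⟪c, y j⟫) :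
    ∑ j ∈ s, w j • x j ≠ ∑ j ∈ s, w j • y j := by
  refine fun h => (congrArg (⟪c, ·⟫) h).not_lt ?_
  simp only [inner_sum, real_inner_smul_right]
  obtain ⟨j₀, hj₀, hw₀⟩ := exists_ne_zero_of_sum_ne_zero hsum
  refine sum_lt_sum (fun j hj => ?_) ⟨j₀, hj₀, ?_⟩
  · rcases eq_or_ne (w j) 0 with hwj | hwj
    · simp [hwj]
    · exact mul_le_mul_of_nonneg_left (hlt j hj hwj).le (hw j hj)
  · exact mul_lt_mul_of_pos_left (hlt j₀ hj₀ hw₀) (lt_of_le_of_ne (hw j₀ hj₀) hw₀.symm)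

/-- Proposition 2 with Remark 4: inter-agent collision avoidance
for two B-spline curves sharing the same knot vector (here `n = m - d`). -/
theorem bspline_interagent_avoidance_common_knots (q m d : ℕ) (τ : ℕ → ℝ)
    (hτ : ∀ j, j < m → τ j < τ (j + 1))
    (hd : 1 ≤ d) (hdm : d ≤ m)
    (p1 p2 : ℕ → EuclideanSpace ℝ (Fin q))
    (hsep : ∀ i, d - 1 ≤ i → i ≤ m - d →
      ∃ c : EuclideanSpace ℝ (Fin q),
        ∀ j1 j2, i - (d - 1) ≤ j1 → j1 ≤ i → i - (d - 1) ≤ j2 → j2 ≤ i →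
          ⟪c, p1 j1⟫ < ⟪c, p2 j2⟫)
    (t : ℝ) (ht1 : τ (d - 1) ≤ t) (ht2 : t < τ (m - d + 1)) :
    (∑ j ∈ Finset.range (m - d + 1), bspline τ d j t • p1 j) ≠
      (∑ j ∈ Finset.range (m - d + 1), bspline τ d j t • p2 j) := by
  set σ : ℕ → ℝ := fun k => τ (min k m)
  have hσ : Monotone σ := monotone_nat_of_le_succ fun k => by
    rcases lt_or_ge k m with hk | hk
    · simp only [σ, min_eq_left hk.le, min_eq_left (Nat.succ_le_of_lt hk)]
      exact (hτ k hk).le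
    · simp only [σ, min_eq_right hk, min_eq_right (hk.trans k.le_succ), le_rfl]
  have hστ : ∀ k ≤ m, τ k = σ k := fun k hk => by simp only [σ, min_eq_left hk]
  have hfreeze : ∀ p : ℕ → EuclideanSpace ℝ (Fin q),
      ∑ j ∈ range (m - d + 1), bspline τ d j t • p j =
        ∑ j ∈ range (m - d + 1), bspline σ d j t • p j := fun p => sum_congr rfl fun j hj => by
    rw [bspline_congr fun k _ hk => hστ k (by rw [mem_range] at hj; omega)]
  rw [hστ _ (by omega)] at ht1 ht2
  obtain ⟨i, hdi, him, ht⟩ := exists_mem_Ico_of_le_of_lt σ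
    (by have := hσ.reflect_lt (ht1.trans_lt ht2); omega) ht1 ht2
  obtain ⟨c, hc⟩ := hsep i hdi (by omega)
  rw [hfreeze, hfreeze]
  refine sum_smul_ne_of_inner_lt c (fun j _ => bspline_nonneg hσ) ?_ fun j _ hj => ?_
  · rw [sum_range_bspline_eq_one hσ hd (by omega) (by omega) ht]
    exact one_ne_zero
  · obtain ⟨hji, hij⟩ := le_and_lt_add_of_bspline_ne_zero hσ ht hj
    exact hc j j (by omega) hji (by omega) hji
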